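/- Let F: (Q̃,Ĩ) → (Q,I) be a Galois covering of bound quivers with Q triangular (no oriented cycles). Suppose γ is a simple cycle in Q̃ consisting of four directed paths x₁ ⤳ y₁, x₁ ⤳ y₂, x₂ ⤳ y₂, x₂ ⤳ y₁ (so σ(γ) = 2), where F(x₁) = F(x₂) = x and F(y₁) = F(y₂) = y. Then γ is irreducible: there do not exist vertices a, b of γ, a directed path p from a to b, and reduced walks w₁, w₂ from a to b with γ = w₁w₂⁻¹, σ(w₁p⁻¹) < 2 and σ(pw₂⁻¹) < 2. -/

import Mathlib

namespace BQ

/-- A quiver: vertices, arrows, start and end maps. -/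
structure Quiv where
  V : Type
  A : Type
  s : A → V
  t : A → V

/-- A letter of a walk: an arrow traversed forwards, or a formal inverse. -/
inductive Letter (Q : Quiv) : Type
  | fwd : Q.A → Letter Q
  | bwd : Q.A → Letter Q

variable {Q : Quiv}

def Letter.src : Letter Q → Q.V
  | .fwd a => Q.s a
  | .bwd a => Q.t a

def Letter.tgt : Letter Q → Q.V
  | .fwd a => Q.t a
  | .bwd a => Q.s a

def Letter.inv : Letter Q → Letter Q
  | .fwd a => .bwd a
  | .bwd a => .fwd a

def Letter.isFwd : Letter Q → Bool
  | .fwd _ => true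
  | .bwd _ => false

/-- `IsWalk Q w x y` : the list of letters `w` is a composable walk from `x` to `y`. -/
def IsWalk (Q : Quiv) (w : List (Letter Q)) (x y : Q.V) : Prop :=
  List.Chain' (fun c d => c.tgt = d.src) w ∧
  (match w with
   | [] => x = y
   | c :: _ => c.src = x) ∧
  (match w.getLast? with
   | none => x = y
   | some c => c.tgt = y)

/-- Formal inverse of a walk. -/
def wInv (Q : Quiv) (w : List (Letter Q)) : List (Letter Q) := (w.map Letter.inv).reverse

/-- The walk associated to a directed path (a list of arrows). -/
def pW (Q : Quiv) (p : List Q.A) : List (Letter Q) := p.map Letter.fwd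

/-- `p` is a directed path from `x` to `y`. -/
def IsDirPath (Q : Quiv) (p : List Q.A) (x y : Q.V) : Prop := IsWalk Q (pW Q p) x y

/-- `Q` has no (nontrivial) oriented cycles. -/
def Triangular (Q : Quiv) : Prop := ∀ (p : List Q.A) (x : Q.V), IsDirPath Q p x x → p = []

/-- `w` is a (nontrivial closed) cycle at `x`. -/
def IsCycleAt (Q : Quiv) (w : List (Letter Q)) (x : Q.V) : Prop := w ≠ [] ∧ IsWalk Q w x x

/-- cyclic successor index -/
def nextIdx {n : ℕ} (i : Fin n) : Fin n := ⟨(i.1 + 1) % n, Nat.mod_lt _ i.pos⟩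

/-- index `i` is a source position of the cyclically-read walk `w`. -/
def srcIdxB (Q : Quiv) (w : List (Letter Q)) (i : Fin w.length) : Bool :=
  !(w.get i).isFwd && (w.get (nextIdx i)).isFwd

/-- index `i` is a sink position of the cyclically-read walk `w`. -/
def sinkIdxB (Q : Quiv) (w : List (Letter Q)) (i : Fin w.length) : Bool :=
  (w.get i).isFwd && !(w.get (nextIdx i)).isFwd

/-- `σ(w)`: number of sources of the cycle `w`. -/
def sigmaC (Q : Quiv) (w : List (Letter Q)) : ℕ :=
  ((List.finRange w.length).filter (fun i => srcIdxB Q w i)).length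

/-- number of sinks of the cycle `w`. -/
def sinkCount (Q : Quiv) (w : List (Letter Q)) : ℕ :=
  ((List.finRange w.length).filter (fun i => sinkIdxB Q w i)).length

/-- `w` is reduced as a cycle (cyclically no immediate cancellation). -/
def IsReducedCyc (Q : Quiv) (w : List (Letter Q)) : Prop :=
  ∀ i : Fin w.length, w.get (nextIdx i) ≠ (w.get i).inv

/-- `w` is reduced as a walk. -/
def IsReducedWalk (Q : Quiv) (w : List (Letter Q)) : Prop :=
  List.Chain' (fun c d => d ≠ c.inv) w

/-- `v` is a source of the cycle `w`. -/
def IsSourceOf (Q : Quiv) (w : List (Letter Q)) (v : Q.V) : Prop :=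
  ∃ i : Fin w.length, srcIdxB Q w i = true ∧ (w.get i).tgt = v

/-- `v` is a sink of the cycle `w`. -/
def IsSinkOf (Q : Quiv) (w : List (Letter Q)) (v : Q.V) : Prop :=
  ∃ i : Fin w.length, sinkIdxB Q w i = true ∧ (w.get i).tgt = v

/-- the cycle `w` is simple: its vertices are pairwise distinct. -/
def IsSimple (Q : Quiv) (w : List (Letter Q)) : Prop :=
  Function.Injective (fun i : Fin w.length => (w.get i).tgt)

/-- `n`-fold repetition of a walk. -/
def repW {α : Type} (n : ℕ) (w : List α) : List α := (List.replicate n w).flatten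

/-- Linear combinations of paths with coefficients in `k`. -/
abbrev Lin (Q : Quiv) (k : Type) [Semiring k] := (List Q.A) →₀ k

/-- `ρ` is a minimal relation of the bound quiver `(Q, I)` from `x` to `y`. -/
def MinRel (Q : Quiv) (k : Type) [Field k] (I : Set (Lin Q k)) (ρ : Lin Q k) (x y : Q.V) :
    Prop :=
  ρ ∈ I ∧ 2 ≤ ρ.support.card ∧
  (∀ p ∈ ρ.support, IsDirPath Q p x y ∧ 2 ≤ p.length) ∧
  ∀ J : Finset (List Q.A), J ⊂ ρ.support → J.Nonempty →
    (J.sum fun p => Finsupp.single p (ρ p)) ∉ I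

/-- One elementary step of natural homotopy. -/
inductive NatStep (Q : Quiv) (k : Type) [Field k] (I : Set (Lin Q k)) :
    List Q.A → List Q.A → Prop
  | mk (u w v₁ v₂ : List Q.A) (ρ : Lin Q k) (x y : Q.V)
      (hmin : MinRel Q k I ρ x y) (h₁ : v₁ ∈ ρ.support) (h₂ : v₂ ∈ ρ.support)
      (hn₁ : v₁ ≠ []) (hn₂ : v₂ ≠ []) :
      NatStep Q k I (u ++ v₁ ++ w) (u ++ v₂ ++ w)

/-- Natural homotopy of paths. -/
def NatHomotopic (Q : Quiv) (k : Type) [Field k] (I : Set (Lin Q k)) :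
    List Q.A → List Q.A → Prop :=
  Relation.ReflTransGen (NatStep Q k I)

/-- The homotopy relation `∼` of the bound quiver `(Q, I)`, as the smallest
equivalence relation cancelling `αα⁻¹`, identifying paths of a minimal relation,
and compatible with concatenation. -/
inductive Homotopic (Q : Quiv) (k : Type) [Field k] (I : Set (Lin Q k)) :
    List (Letter Q) → List (Letter Q) → Prop
  | cancel_fb (a : Q.A) : Homotopic Q k I [.fwd a, .bwd a] []
  | cancel_bf (a : Q.A) : Homotopic Q k I [.bwd a, .fwd a] []
  | minrel (ρ : Lin Q k) (x y : Q.V) (p q : List Q.A) (h : MinRel Q k I ρ x y)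
      (hp : p ∈ ρ.support) (hq : q ∈ ρ.support) : Homotopic Q k I (pW Q p) (pW Q q)
  | refl (w : List (Letter Q)) : Homotopic Q k I w w
  | symm {u v : List (Letter Q)} : Homotopic Q k I u v → Homotopic Q k I v u
  | trans {u v w : List (Letter Q)} :
      Homotopic Q k I u v → Homotopic Q k I v w → Homotopic Q k I u w
  | comp (w₁ w₂ : List (Letter Q)) {u v : List (Letter Q)} :
      Homotopic Q k I u v → Homotopic Q k I (w₁ ++ u ++ w₂) (w₁ ++ v ++ w₂)

/-- Natural contractibility of reduced cycles (Assem–Liu–Zhang). -/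
inductive NatContractible (Q : Quiv) (k : Type) [Field k] (I : Set (Lin Q k)) :
    List (Letter Q) → Prop
  | contour (C : List (Letter Q)) (p q : List Q.A) (x y : Q.V) (m : ℕ)
      (hp : IsDirPath Q p x y) (hq : IsDirPath Q q x y) (hpn : p ≠ []) (hqn : q ≠ [])
      (hrot : C.rotate m = pW Q p ++ wInv Q (pW Q q))
      (hσ : sigmaC Q C = 1)
      (hnat : NatHomotopic Q k I p q) : NatContractible Q k I C
  | split (C w₁ w₂ : List (Letter Q)) (p : List Q.A) (x y : Q.V)
      (h₁ : IsWalk Q w₁ x y) (h₂ : IsWalk Q w₂ x y) (hp : IsDirPath Q p x y)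
      (hC : C = w₁ ++ wInv Q w₂) (hσ : 1 < sigmaC Q C)
      (hσ₁ : sigmaC Q (w₁ ++ wInv Q (pW Q p)) < sigmaC Q C)
      (hσ₂ : sigmaC Q (w₂ ++ wInv Q (pW Q p)) < sigmaC Q C)
      (hc₁ : NatContractible Q k I (w₁ ++ wInv Q (pW Q p)))
      (hc₂ : NatContractible Q k I (w₂ ++ wInv Q (pW Q p))) : NatContractible Q k I C

/-- A Galois covering of bound quivers, given by the action of a group `G`. -/
structure GaloisCov (k : Type) [Field k] (Qt Q : Quiv)
    (It : Set (Lin Qt k)) (I : Set (Lin Q k)) (G : Type) [Group G] where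
  onV : Qt.V → Q.V
  onA : Qt.A → Q.A
  comm_s : ∀ a, Q.s (onA a) = onV (Qt.s a)
  comm_t : ∀ a, Q.t (onA a) = onV (Qt.t a)
  surjV : Function.Surjective onV
  surjA : Function.Surjective onA
  actV : G → Qt.V → Qt.V
  actA : G → Qt.A → Qt.A
  actV_one : ∀ v, actV 1 v = v
  actV_mul : ∀ g h v, actV (g * h) v = actV g (actV h v)
  actA_one : ∀ a, actA 1 a = a
  actA_mul : ∀ g h a, actA (g * h) a = actA g (actA h a)
  act_s : ∀ g a, Qt.s (actA g a) = actV g (Qt.s a)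
  act_t : ∀ g a, Qt.t (actA g a) = actV g (Qt.t a)
  onV_act : ∀ g v, onV (actV g v) = onV v
  onA_act : ∀ g a, onA (actA g a) = onA a
  free : ∀ g v, actV g v = v → g = 1
  fiberV : ∀ v w, onV v = onV w → ∃ g, actV g v = w
  fiberA : ∀ a b, onA a = onA b → ∃ g, actA g a = b
  mapsIdeal : ∀ ρ ∈ It, Finsupp.mapDomain (List.map onA) ρ ∈ I

/-- The two-sided ideal of the path algebra generated by a set of relations. -/
def genIdeal (k : Type) [Field k] (Q : Quiv) (gens : Set (Lin Q k)) : Set (Lin Q k) :=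
  (Submodule.span k
    {x : Lin Q k | ∃ ρ ∈ gens, ∃ u w : List Q.A,
      x = Finsupp.mapDomain (fun p => u ++ p ++ w) ρ} : Set (Lin Q k))

/-- `d(x,y)`: the maximal length of a directed path from `x` to `y`. -/
noncomputable def qDist (Q : Quiv) (x y : Q.V) : ℕ :=
  sSup {n | ∃ w, IsDirPath Q w x y ∧ w.length = n}

/-! A split `γ = w₁ w₂⁻¹` with a nonempty path `p : a ⤳ b` yields the cycles `w₁ p⁻¹` and
`p w₂⁻¹`. Each of them starts with a forward and ends with a backward letter, so it has a source
where it closes up, and a backward letter followed by a forward one inside `w₁` or inside `w₂⁻¹`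
would be a second source. The cycle `γ` has such a turn at `x₂`, so the split is exactly there:
`a = x₁` and `b = x₂`. Then `F(p)` is an oriented cycle at `x` in the triangular quiver `Q`,
which is impossible. A trivial `p` is excluded by simplicity of `γ`: then `a = b` is visited once,
so `w₁` or `w₂` is empty and one of the two new cycles is `γ` itself. -/

theorem _root_.List.append_eq_append_cons_cons {α : Type*} {l₁ l₂ u v : List α} {a b : α}
    (h : l₁ ++ l₂ = u ++ a :: b :: v) :
    (∃ v₁, l₁ = u ++ a :: b :: v₁) ∨ l₁ = u ++ [a] ∨ ∃ u₂, l₂ = u₂ ++ a :: b :: v := by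
  rcases List.append_eq_append_iff.mp h with ⟨u₂, rfl, rfl⟩ | ⟨c, rfl, hc⟩
  · exact .inr (.inr ⟨u₂, rfl⟩)
  · rcases c with _ | ⟨_, _ | ⟨_, c⟩⟩ <;> simp_all

section Walks

variable {Q : Quiv}

@[simp]
theorem Letter.inv_fwd (a : Q.A) : (Letter.fwd a).inv = .bwd a := rfl

@[simp]
theorem Letter.tgt_inv (e : Letter Q) : e.inv.tgt = e.src := by cases e <;> rfl

theorem isWalk_nil {x y : Q.V} : IsWalk Q [] x y ↔ x = y := by
  simp [IsWalk, List.Chain']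

theorem isWalk_cons {e : Letter Q} {w : List (Letter Q)} {x y : Q.V} :
    IsWalk Q (e :: w) x y ↔ e.src = x ∧ IsWalk Q w e.tgt y := by
  cases w with
  | nil => simp [IsWalk, List.Chain', eq_comm]
  | cons d w =>
    simp only [IsWalk, List.Chain', List.isChain_cons, List.head?_cons, Option.mem_def,
      Option.some.injEq, forall_eq', List.getLast?_cons, Option.getD_some]
    tauto

theorem IsWalk.tgt_eq_of_concat {w : List (Letter Q)} {e : Letter Q} {x y : Q.V}
    (h : IsWalk Q (w ++ [e]) x y) : e.tgt = y := by
  simpa [IsWalk] using h.2.2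

@[simp]
theorem wInv_cons (e : Letter Q) (w : List (Letter Q)) :
    wInv Q (e :: w) = wInv Q w ++ [e.inv] := by
  simp [wInv]

@[simp]
theorem pW_cons (a : Q.A) (p : List Q.A) : pW Q (a :: p) = .fwd a :: pW Q p := rfl

theorem isDirPath_nil {x y : Q.V} : IsDirPath Q [] x y ↔ x = y := isWalk_nil

theorem isDirPath_cons {a : Q.A} {p : List Q.A} {x y : Q.V} :
    IsDirPath Q (a :: p) x y ↔ Q.s a = x ∧ IsDirPath Q p (Q.t a) y := isWalk_cons

end Walks

section Cycles

variable {Q : Quiv}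

theorem two_le_sigmaC_of_ne {w : List (Letter Q)} {i j : Fin w.length} (hij : i ≠ j)
    (hi : srcIdxB Q w i = true) (hj : srcIdxB Q w j = true) : 2 ≤ sigmaC Q w := by
  have hsub : [i, j] ⊆ (List.finRange w.length).filter (srcIdxB Q w ·) := by
    simp [List.subset_def, hi, hj]
  simpa [sigmaC] using (List.subperm_of_subset (by simp [hij]) hsub).length_le

theorem two_le_sigmaC (u v : List (Letter Q)) (a b c d : Q.A) :
    2 ≤ sigmaC Q (.fwd a :: u ++ .bwd b :: .fwd c :: v ++ [.bwd d]) := by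
  set w : List (Letter Q) := .fwd a :: u ++ .bwd b :: .fwd c :: v ++ [.bwd d] with hw
  have hlen : w.length = u.length + v.length + 4 := by simp [hw]; omega
  refine two_le_sigmaC_of_ne (i := ⟨u.length + 1, by omega⟩) (j := ⟨w.length - 1, by omega⟩)
    (by simp [Fin.ext_iff]; omega) ?_ ?_
  · have : (u.length + 1 + 1) % w.length = u.length + 2 := Nat.mod_eq_of_lt (by omega)
    simp only [srcIdxB, nextIdx, this, List.get_eq_getElem]
    grind [Letter.isFwd]
  · have : (w.length - 1 + 1) % w.length = 0 := by rw [Nat.sub_add_cancel (by omega), Nat.mod_self]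
    simp only [srcIdxB, nextIdx, this, List.get_eq_getElem]
    grind [Letter.isFwd]

theorem IsSimple.tgt_ne {u v : List (Letter Q)} {e f : Letter Q}
    (h : IsSimple Q (u ++ e :: (v ++ [f]))) : e.tgt ≠ f.tgt := by
  intro he
  have := @h ⟨u.length, by simp⟩ ⟨u.length + v.length + 1, by simp; omega⟩ (by grind)
  simp [Fin.ext_iff] at this
  omega

theorem eq_nil_or_eq_nil_of_isSimple {w₁ w₂ : List (Letter Q)} {x : Q.V}
    (h : IsSimple Q (w₁ ++ wInv Q w₂)) (h₁ : IsWalk Q w₁ x x) (h₂ : IsWalk Q w₂ x x) :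
    w₁ = [] ∨ w₂ = [] := by
  rcases w₁.eq_nil_or_concat' with rfl | ⟨u, e, rfl⟩
  · exact .inl rfl
  rcases w₂ with _ | ⟨f, v⟩
  · exact .inr rfl
  rw [wInv_cons, List.append_assoc, List.singleton_append] at h
  exact absurd (by rw [h₁.tgt_eq_of_concat, Letter.tgt_inv, (isWalk_cons.1 h₂).1]) h.tgt_ne

theorem eq_of_sigmaC_lt_two {w₁ W u v : List (Letter Q)} {p : List Q.A} {a b c d : Q.A}
    (hp : p ≠ []) (h : w₁ ++ W = .fwd a :: u ++ .bwd b :: .fwd c :: v ++ [.bwd d])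
    (h₁ : sigmaC Q (w₁ ++ wInv Q (pW Q p)) < 2) (h₂ : sigmaC Q (pW Q p ++ W) < 2) :
    w₁ = .fwd a :: u ++ [.bwd b] := by
  obtain ⟨e, p, rfl⟩ := List.exists_cons_of_ne_nil hp
  have h' : w₁ ++ W = (.fwd a :: u) ++ .bwd b :: .fwd c :: (v ++ [.bwd d]) := by simp [h]
  rcases List.append_eq_append_cons_cons h' with ⟨v₁, rfl⟩ | hw₁ | ⟨u₂, rfl⟩
  · have := two_le_sigmaC u (v₁ ++ wInv Q (pW Q p)) a b c e
    simp at h₁ this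
    omega
  · exact hw₁
  · have := two_le_sigmaC (pW Q p ++ u₂) v e b c d
    simp at h₂ this
    omega

end Cycles

theorem GaloisCov.isDirPath_map {k : Type} [Field k] {Qt Q : Quiv} {It : Set (Lin Qt k)}
    {I : Set (Lin Q k)} {G : Type} [Group G] (F : GaloisCov k Qt Q It I G)
    {p : List Qt.A} {x y : Qt.V} (h : IsDirPath Qt p x y) :
    IsDirPath Q (p.map F.onA) (F.onV x) (F.onV y) := by
  induction p generalizing x with
  | nil => exact isDirPath_nil.2 (congrArg F.onV (isDirPath_nil.1 h))
  | cons a p ih =>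
    obtain ⟨rfl, hp⟩ := isDirPath_cons.1 h
    exact isDirPath_cons.2 ⟨F.comm_s a, F.comm_t a ▸ ih hp⟩

theorem stmt9_general (k : Type) [Field k] (Qt Q : Quiv)
    (It : Set (Lin Qt k)) (I : Set (Lin Q k)) (G : Type) [Group G]
    (F : GaloisCov k Qt Q It I G) (hQ : Triangular Q)
    (x : Q.V) (x₁ x₂ y₁ : Qt.V)
    (p₁₁ p₁₂ p₂₂ p₂₁ : List Qt.A)
    (h₁₁ : IsDirPath Qt p₁₁ x₁ y₁)
    (h₂₁ : IsDirPath Qt p₂₁ x₂ y₁)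
    (hn₁₁ : p₁₁ ≠ []) (hn₁₂ : p₁₂ ≠ []) (hn₂₂ : p₂₂ ≠ []) (hn₂₁ : p₂₁ ≠ [])
    (hFx : F.onV x₁ = x ∧ F.onV x₂ = x)
    (γ : List (Letter Qt))
    (hγdef : γ = pW Qt p₁₁ ++ wInv Qt (pW Qt p₂₁) ++ pW Qt p₂₂ ++ wInv Qt (pW Qt p₁₂))
    (hγsimple : IsSimple Qt γ)
    (hσ : sigmaC Qt γ = 2) :
    ¬ ∃ (a b : Qt.V) (p : List Qt.A) (w₁ w₂ : List (Letter Qt)),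
      IsDirPath Qt p a b ∧
      IsWalk Qt w₁ a b ∧ IsWalk Qt w₂ a b ∧
      IsReducedWalk Qt w₁ ∧ IsReducedWalk Qt w₂ ∧
      γ = w₁ ++ wInv Qt w₂ ∧
      sigmaC Qt (w₁ ++ wInv Qt (pW Qt p)) < 2 ∧
      sigmaC Qt (pW Qt p ++ wInv Qt w₂) < 2 := by
  rintro ⟨a, b, p, w₁, w₂, hp, hw₁, hw₂, -, -, hsplit, hσ₁, hσ₂⟩
  have hp_ne : p ≠ [] := by
    rintro rfl
    obtain rfl := isDirPath_nil.1 hp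
    rcases eq_nil_or_eq_nil_of_isSimple (hsplit ▸ hγsimple) hw₁ hw₂ with rfl | rfl
    · simp [pW, ← hsplit, hσ] at hσ₂
    · simp [pW, wInv] at hsplit hσ₁
      simp [← hsplit, hσ] at hσ₁
  obtain ⟨a₁₁, p₁₁, rfl⟩ := List.exists_cons_of_ne_nil hn₁₁
  obtain ⟨a₁₂, p₁₂, rfl⟩ := List.exists_cons_of_ne_nil hn₁₂
  obtain ⟨a₂₂, p₂₂, rfl⟩ := List.exists_cons_of_ne_nil hn₂₂
  obtain ⟨a₂₁, p₂₁, rfl⟩ := List.exists_cons_of_ne_nil hn₂₁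
  have hw₁_eq : w₁ = .fwd a₁₁ :: (pW Qt p₁₁ ++ wInv Qt (pW Qt p₂₁)) ++ [.bwd a₂₁] :=
    eq_of_sigmaC_lt_two (v := pW Qt p₂₂ ++ wInv Qt (pW Qt p₁₂)) (c := a₂₂) (d := a₁₂) hp_ne
      (by simp [← hsplit, hγdef]) hσ₁ hσ₂
  subst hw₁_eq
  obtain rfl : x₁ = a := (isDirPath_cons.1 h₁₁).1.symm.trans (isWalk_cons.1 hw₁).1
  obtain rfl : x₂ = b := (isDirPath_cons.1 h₂₁).1.symm.trans hw₁.tgt_eq_of_concat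
  exact hp_ne (List.map_eq_nil_iff.1 (hQ _ x (hFx.1 ▸ hFx.2 ▸ F.isDirPath_map hp)))

/-- Proposition 2.2: a simple cycle in the covering formed by four
directed paths `x₁ ⤳ y₁`, `x₁ ⤳ y₂`, `x₂ ⤳ y₂`, `x₂ ⤳ y₁` lying over the same
pair `(x, y)` is irreducible. -/
theorem stmt9 (k : Type) [Field k] (Qt Q : Quiv)
    (It : Set (Lin Qt k)) (I : Set (Lin Q k)) (G : Type) [Group G]
    (F : GaloisCov k Qt Q It I G) (hQ : Triangular Q)
    (x y : Q.V) (x₁ x₂ y₁ y₂ : Qt.V)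
    (p₁₁ p₁₂ p₂₂ p₂₁ : List Qt.A)
    (h₁₁ : IsDirPath Qt p₁₁ x₁ y₁) (h₁₂ : IsDirPath Qt p₁₂ x₁ y₂)
    (h₂₂ : IsDirPath Qt p₂₂ x₂ y₂) (h₂₁ : IsDirPath Qt p₂₁ x₂ y₁)
    (hn₁₁ : p₁₁ ≠ []) (hn₁₂ : p₁₂ ≠ []) (hn₂₂ : p₂₂ ≠ []) (hn₂₁ : p₂₁ ≠ [])
    (hFx : F.onV x₁ = x ∧ F.onV x₂ = x) (hFy : F.onV y₁ = y ∧ F.onV y₂ = y)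
    (γ : List (Letter Qt))
    (hγdef : γ = pW Qt p₁₁ ++ wInv Qt (pW Qt p₂₁) ++ pW Qt p₂₂ ++ wInv Qt (pW Qt p₁₂))
    (hγred : IsReducedCyc Qt γ) (hγsimple : IsSimple Qt γ)
    (hσ : sigmaC Qt γ = 2) :
    ¬ ∃ (a b : Qt.V) (p : List Qt.A) (w₁ w₂ : List (Letter Qt)),
      IsDirPath Qt p a b ∧
      IsWalk Qt w₁ a b ∧ IsWalk Qt w₂ a b ∧
      IsReducedWalk Qt w₁ ∧ IsReducedWalk Qt w₂ ∧
      γ = w₁ ++ wInv Qt w₂ ∧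
      sigmaC Qt (w₁ ++ wInv Qt (pW Qt p)) < 2 ∧
      sigmaC Qt (pW Qt p ++ wInv Qt w₂) < 2 :=
  stmt9_general k Qt Q It I G F hQ x x₁ x₂ y₁ p₁₁ p₁₂ p₂₂ p₂₁ h₁₁ h₂₁ hn₁₁ hn₁₂ hn₂₂ hn₂₁ hFx γ
    hγdef hγsimple hσ

end BQ
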